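/- arXiv:2006.04635 — 2 statements merged into one kernel-verified Lean document; each statement's English description precedes it below -/
import Mathlib

section
/- Derivative of the running maximum payoff: let r : [0,∞) → ℝ^A be a continuous bounded reward stream on a finite set A, and define M(t) = max_p ⟨p, ∫_0^t r_s ds⟩ over probability distributions p. Then wherever M is differentiable (almost every t), M'(t) = ⟨b_t, r_t⟩ for any maximizer b_t of ⟨p, ∫_0^t r_s ds⟩. -/
open Real BigOperators MeasureTheory intervalIntegral

def IsDist {A : Type*} [Fintype A] (p : A → ℝ) : Prop :=
  (∀ a, 0 ≤ p a) ∧ ∑ a, p a = 1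

open Filter Topology

theorem HasDerivAt.eq_of_eventuallyLE_of_eq {f g : ℝ → ℝ} {f' g' x : ℝ}
    (hf : HasDerivAt f f' x) (hg : HasDerivAt g g' x) (hle : g ≤ᶠ[𝓝 x] f)
    (heq : g x = f x) : g' = f' := by
  have hmin : IsLocalMin (f - g) x := hle.mono fun y hy => by
    simp only [Pi.sub_apply, heq, sub_self]
    linarith
  linarith [hmin.hasDerivAt_eq_zero (hf.sub hg)]

section MixedPayoffs

variable {A : Type*} [Fintype A]

def mixedPayoffs (v : A → ℝ) : Set ℝ :=
  {x | ∃ p : A → ℝ, IsDist p ∧ x = ∑ a, p a * v a}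

theorem IsDist.sum_mul_le_sum_abs {p : A → ℝ} (hp : IsDist p) (v : A → ℝ) :
    ∑ a, p a * v a ≤ ∑ a, |v a| :=
  calc ∑ a, p a * v a ≤ ∑ a, p a * ∑ b, |v b| := by
        refine Finset.sum_le_sum fun a _ => mul_le_mul_of_nonneg_left ?_ (hp.1 a)
        exact (le_abs_self _).trans
          (Finset.single_le_sum (fun b _ => abs_nonneg (v b)) (Finset.mem_univ a))
    _ = ∑ b, |v b| := by rw [← Finset.sum_mul, hp.2, one_mul]

theorem bddAbove_mixedPayoffs (v : A → ℝ) : BddAbove (mixedPayoffs v) := by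
  refine ⟨∑ a, |v a|, ?_⟩
  rintro x ⟨p, hp, rfl⟩
  exact hp.sum_mul_le_sum_abs v

theorem IsDist.sum_mul_le_sSup_mixedPayoffs {p : A → ℝ} (hp : IsDist p) (v : A → ℝ) :
    ∑ a, p a * v a ≤ sSup (mixedPayoffs v) :=
  le_csSup (bddAbove_mixedPayoffs v) ⟨p, hp, rfl⟩

theorem sSup_mixedPayoffs_eq_of_isMax {b v : A → ℝ} (hb : IsDist b)
    (hmax : ∀ p : A → ℝ, IsDist p → ∑ a, p a * v a ≤ ∑ a, b a * v a) :
    sSup (mixedPayoffs v) = ∑ a, b a * v a :=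
  IsGreatest.csSup_eq ⟨⟨b, hb, rfl⟩, by rintro x ⟨p, hp, rfl⟩; exact hmax p hp⟩

theorem hasDerivAt_sum_mul_integral {r : ℝ → A → ℝ} (hr : ∀ a, Continuous (fun s => r s a))
    (w : A → ℝ) (t : ℝ) :
    HasDerivAt (fun u => ∑ a, w a * ∫ s in (0:ℝ)..u, r s a) (∑ a, w a * r t a) t :=
  HasDerivAt.fun_sum fun a _ =>
    ((hr a).integral_hasStrictDerivAt 0 t).hasDerivAt.const_mul (w a)

end MixedPayoffs

theorem envelope_running_max_general {A : Type*} [Fintype A]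
    (r : ℝ → A → ℝ)
    (hrcont : ∀ a, Continuous (fun s => r s a))
    (M : ℝ → ℝ)
    (hM : ∀ t, M t = sSup {x : ℝ | ∃ p : A → ℝ, IsDist p ∧
      x = ∑ a, p a * (∫ s in (0:ℝ)..t, r s a)}) :
    ∀ t ≥ (0:ℝ), ∀ d : ℝ, HasDerivAt M d t →
      ∀ bt : A → ℝ, IsDist bt →
        (∀ p : A → ℝ, IsDist p →
          ∑ a, p a * (∫ s in (0:ℝ)..t, r s a) ≤ ∑ a, bt a * (∫ s in (0:ℝ)..t, r s a)) →
        d = ∑ a, bt a * r t a := by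
  intro t _ d hd bt hbt hmax
  -- The payoff of the fixed mixture `bt` touches `M` from below at `t`.
  have hle : ∀ u, ∑ a, bt a * (∫ s in (0:ℝ)..u, r s a) ≤ M u := fun u =>
    (hM u).symm ▸ hbt.sum_mul_le_sSup_mixedPayoffs _
  have heq : ∑ a, bt a * (∫ s in (0:ℝ)..t, r s a) = M t :=
    ((hM t).trans (sSup_mixedPayoffs_eq_of_isMax hbt hmax)).symm
  exact (hd.eq_of_eventuallyLE_of_eq (hasDerivAt_sum_mul_integral hrcont bt t)
    (Eventually.of_forall hle) heq).symm

/-- Envelope theorem for the running maximum payoff of continuous-time fictitious play: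
wherever `M` is differentiable, its derivative is `⟨b_t, r_t⟩` for any maximizer `b_t`. -/
theorem envelope_running_max {A : Type*} [Fintype A] [Nonempty A]
    (r : ℝ → A → ℝ)
    (hrcont : ∀ a, Continuous (fun s => r s a))
    (hrbdd : ∃ M : ℝ, ∀ s a, |r s a| ≤ M)
    (M : ℝ → ℝ)
    (hM : ∀ t, M t = sSup {x : ℝ | ∃ p : A → ℝ, IsDist p ∧
      x = ∑ a, p a * (∫ s in (0:ℝ)..t, r s a)}) :
    ∀ t ≥ (0:ℝ), ∀ d : ℝ, HasDerivAt M d t →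
      ∀ bt : A → ℝ, IsDist bt →
        (∀ p : A → ℝ, IsDist p →
          ∑ a, p a * (∫ s in (0:ℝ)..t, r s a) ≤ ∑ a, bt a * (∫ s in (0:ℝ)..t, r s a)) →
        d = ∑ a, bt a * r t a :=
  envelope_running_max_general r hrcont M hM
end

section
/- Bounded regret of continuous-time stochastic fictitious play with respect to regularized payoffs: with A finite, λ > 0, r : [0,∞) → ℝ^A continuous bounded, and b_t = argmax_p (⟨p, (1/t)∫_0^t r_s ds⟩ + λ·H(p)) for t ≥ 1 (b_t measurable arbitrary for t < 1), for all T ≥ 1: max_p ∫_0^T (⟨p, r_s⟩ + λ H(p)) ds − ∫_0^T (⟨b_s, r_s⟩ + λ H(b_s)) ds = max_p ∫_0^1 (⟨p, r_s⟩ + λ H(p)) ds − ∫_0^1 (⟨b_s, r_s⟩ + λ H(b_s)) ds, a quantity bounded independently of T. -/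
open Real BigOperators MeasureTheory intervalIntegral

noncomputable def entropy {A : Type*} [Fintype A] (p : A → ℝ) : ℝ :=
  -∑ a, p a * Real.log (p a)

/-!
Write `v t = (1/t) ∫₀ᵗ r` for the running average. By Gibbs' variational principle the
regularized payoff `⟨p, v⟩ + λ H(p)` is maximised over distributions exactly at
`softmax (v / λ)`, with maximum `λ log ∑ₐ exp (v a / λ)`. Hence for `t ≥ 1` the strategy `b t`
is this softmax at `v t`, and the best fixed distribution in hindsight over `[0, t]` earns
`Φ t = t · λ log ∑ₐ exp (v t a / λ)`. By the envelope theorem `Φ' t = ⟨b t, r t⟩ + λ H(b t)`,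
the instantaneous payoff of `b`, so the regret `Φ T - ∫₀ᵀ (⟨b, r⟩ + λ H(b))` does not change
for `T ≥ 1`.
-/

open InformationTheory

section Gibbs

variable {A : Type*} [Fintype A]

noncomputable def softmax (lam : ℝ) (v : A → ℝ) (a : A) : ℝ :=
  exp (v a / lam) / ∑ c, exp (v c / lam)

noncomputable def logPartition (lam : ℝ) (v : A → ℝ) : ℝ :=
  lam * log (∑ a, exp (v a / lam))

noncomputable def regularizedPayoff (lam : ℝ) (v p : A → ℝ) : ℝ :=
  (∑ a, p a * v a) + lam * entropy p

lemma mul_klFun_div {p q : ℝ} (hq : 0 < q) :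
    q * klFun (p / q) = p * log p - p * log q + q - p := by
  rcases eq_or_ne p 0 with rfl | hp
  · simp [klFun]
  · rw [klFun, log_div hp hq.ne']
    field_simp

variable [Nonempty A] {lam : ℝ}

lemma sum_exp_div_pos (lam : ℝ) (v : A → ℝ) : 0 < ∑ a, exp (v a / lam) :=
  Finset.sum_pos (fun _ _ => exp_pos _) Finset.univ_nonempty

lemma softmax_pos (lam : ℝ) (v : A → ℝ) (a : A) : 0 < softmax lam v a :=
  div_pos (exp_pos _) (sum_exp_div_pos lam v)

lemma isDist_softmax (lam : ℝ) (v : A → ℝ) : IsDist (softmax lam v) :=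
  ⟨fun a => (softmax_pos lam v a).le, by
    simp only [softmax, ← Finset.sum_div, div_self (sum_exp_div_pos lam v).ne']⟩

lemma log_softmax (lam : ℝ) (v : A → ℝ) (a : A) :
    log (softmax lam v a) = v a / lam - log (∑ c, exp (v c / lam)) := by
  rw [softmax, log_div (exp_pos _).ne' (sum_exp_div_pos lam v).ne', log_exp]

/-- Gibbs' variational identity: the sum on the right is the Kullback–Leibler divergence of `p`
from `softmax lam v`. -/
lemma regularizedPayoff_eq_logPartition_sub (hlam : lam ≠ 0) (v : A → ℝ) {p : A → ℝ}
    (hp : IsDist p) :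
    regularizedPayoff lam v p =
      logPartition lam v - lam * ∑ a, softmax lam v a * klFun (p a / softmax lam v a) := by
  simp only [mul_klFun_div (softmax_pos lam v _), log_softmax, Finset.sum_add_distrib,
    Finset.sum_sub_distrib, mul_sub, (isDist_softmax lam v).2, hp.2, ← Finset.sum_mul,
    ← mul_div_assoc, ← Finset.sum_div, regularizedPayoff, entropy, logPartition]
  field_simp
  ring

lemma regularizedPayoff_softmax (hlam : lam ≠ 0) (v : A → ℝ) :
    regularizedPayoff lam v (softmax lam v) = logPartition lam v := by
  simp [regularizedPayoff_eq_logPartition_sub hlam v (isDist_softmax lam v),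
    div_self (softmax_pos lam v _).ne', klFun_one]

lemma regularizedPayoff_le_logPartition (hlam : 0 < lam) (v : A → ℝ) {p : A → ℝ}
    (hp : IsDist p) : regularizedPayoff lam v p ≤ logPartition lam v := by
  rw [regularizedPayoff_eq_logPartition_sub hlam.ne' v hp, sub_le_self_iff]
  exact mul_nonneg hlam.le <| Finset.sum_nonneg fun a _ => mul_nonneg (softmax_pos lam v a).le
    (klFun_nonneg (div_nonneg (hp.1 a) (softmax_pos lam v a).le))

lemma eq_softmax_of_forall_le (hlam : 0 < lam) (v : A → ℝ) {q : A → ℝ} (hq : IsDist q)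
    (hmax : ∀ p, IsDist p → regularizedPayoff lam v p ≤ regularizedPayoff lam v q) :
    q = softmax lam v := by
  have hnonneg : ∀ a ∈ Finset.univ, 0 ≤ softmax lam v a * klFun (q a / softmax lam v a) :=
    fun a _ => mul_nonneg (softmax_pos lam v a).le
      (klFun_nonneg (div_nonneg (hq.1 a) (softmax_pos lam v a).le))
  have hkl : ∑ a, softmax lam v a * klFun (q a / softmax lam v a) = 0 := by
    have h := hmax _ (isDist_softmax lam v)
    rw [regularizedPayoff_softmax hlam.ne', regularizedPayoff_eq_logPartition_sub hlam.ne' v hq]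
      at h
    exact le_antisymm (nonpos_of_mul_nonpos_right (by linarith) hlam) (Finset.sum_nonneg hnonneg)
  funext a
  have hka := (Finset.sum_eq_zero_iff_of_nonneg hnonneg).1 hkl a (Finset.mem_univ a)
  rw [mul_eq_zero, klFun_eq_zero_iff (div_nonneg (hq.1 a) (softmax_pos lam v a).le),
    div_eq_one_iff_eq (softmax_pos lam v a).ne'] at hka
  exact hka.resolve_left (softmax_pos lam v a).ne'

lemma hasDerivAt_logPartition (hlam : lam ≠ 0) {v : ℝ → A → ℝ} {v' : A → ℝ} {t : ℝ}
    (hv : ∀ a, HasDerivAt (fun t => v t a) (v' a) t) :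
    HasDerivAt (fun t => logPartition lam (v t)) (∑ a, softmax lam (v t) a * v' a) t := by
  have hlog := (HasDerivAt.fun_sum fun a _ => ((hv a).div_const lam).exp).log
    (sum_exp_div_pos lam (v t)).ne'
  refine (hlog.const_mul lam).congr_deriv ?_
  simp only [softmax, Finset.sum_div, Finset.mul_sum]
  refine Finset.sum_congr rfl fun a _ => ?_
  field_simp

end Gibbs

section RunningAverage

variable {A : Type*}

noncomputable def runningAverage (r : ℝ → A → ℝ) (t : ℝ) (a : A) : ℝ :=
  1 / t * ∫ s in (0:ℝ)..t, r s a

lemma hasDerivAt_runningAverage {r : ℝ → A → ℝ} {a : A} (hr : Continuous fun s => r s a)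
    {t : ℝ} (ht : t ≠ 0) :
    HasDerivAt (fun t => runningAverage r t a) ((r t a - runningAverage r t a) / t) t := by
  have h := (hasDerivAt_inv ht).fun_mul (hr.integral_hasStrictDerivAt 0 t).hasDerivAt
  simp only [← one_div] at h
  refine h.congr_deriv ?_
  simp only [runningAverage]
  field_simp
  ring

variable [Fintype A] {r : ℝ → A → ℝ} {lam : ℝ}

lemma integral_regularizedPayoff (hr : ∀ a, Continuous fun s => r s a) (lam : ℝ) (p : A → ℝ)
    {t : ℝ} (ht : t ≠ 0) :
    ∫ s in (0:ℝ)..t, regularizedPayoff lam (r s) p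
      = t * regularizedPayoff lam (runningAverage r t) p := by
  have hint : ∀ a ∈ Finset.univ, IntervalIntegrable (fun s => p a * r s a) volume 0 t :=
    fun a _ => (continuous_const.mul (hr a)).intervalIntegrable 0 t
  simp only [regularizedPayoff]
  rw [intervalIntegral.integral_add (f := fun s => ∑ a, p a * r s a)
    ((continuous_finsetSum _ fun a _ => continuous_const.mul (hr a)).intervalIntegrable 0 t)
    intervalIntegrable_const, integral_finsetSum hint, intervalIntegral.integral_const]
  simp only [intervalIntegral.integral_const_mul, runningAverage, smul_eq_mul, sub_zero, mul_add,
    Finset.mul_sum]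
  congr 1
  refine Finset.sum_congr rfl fun a _ => ?_
  field_simp

variable [Nonempty A]

lemma sSup_integral_regularizedPayoff (hr : ∀ a, Continuous fun s => r s a) (hlam : 0 < lam)
    {t : ℝ} (ht : 0 < t) :
    sSup {x : ℝ | ∃ p : A → ℝ, IsDist p ∧ x = ∫ s in (0:ℝ)..t, regularizedPayoff lam (r s) p}
      = t * logPartition lam (runningAverage r t) := by
  refine IsGreatest.csSup_eq
    ⟨⟨softmax lam (runningAverage r t), isDist_softmax lam (runningAverage r t), ?_⟩, ?_⟩
  · rw [integral_regularizedPayoff hr lam _ ht.ne', regularizedPayoff_softmax hlam.ne']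
  · rintro x ⟨p, hp, rfl⟩
    rw [integral_regularizedPayoff hr lam _ ht.ne']
    exact mul_le_mul_of_nonneg_left (regularizedPayoff_le_logPartition hlam _ hp) ht.le

lemma hasDerivAt_mul_logPartition_runningAverage (hr : ∀ a, Continuous fun s => r s a)
    (hlam : lam ≠ 0) {t : ℝ} (ht : t ≠ 0) :
    HasDerivAt (fun t => t * logPartition lam (runningAverage r t))
      (regularizedPayoff lam (r t) (softmax lam (runningAverage r t))) t := by
  have h := (hasDerivAt_id t).fun_mul
    (hasDerivAt_logPartition hlam fun a => hasDerivAt_runningAverage (hr a) ht)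
  refine h.congr_deriv ?_
  set q := softmax lam (runningAverage r t)
  have hterm : ∀ a, t * (q a * ((r t a - runningAverage r t a) / t))
      = q a * r t a - q a * runningAverage r t a := fun a => by field_simp
  rw [id, one_mul, ← regularizedPayoff_softmax hlam, Finset.mul_sum]
  simp only [hterm, Finset.sum_sub_distrib, regularizedPayoff]
  ring

end RunningAverage

section Integrability

variable {A : Type*} [Fintype A]

lemma IsDist.le_one {p : A → ℝ} (hp : IsDist p) (a : A) : p a ≤ 1 :=
  hp.2 ▸ Finset.single_le_sum (fun c _ => hp.1 c) (Finset.mem_univ a)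

lemma abs_entropy_le_card {p : A → ℝ} (hp : IsDist p) : |entropy p| ≤ Fintype.card A := by
  have hentropy : entropy p = ∑ a, negMulLog (p a) := by
    simp [entropy, negMulLog]
  rw [hentropy,
    abs_of_nonneg (Finset.sum_nonneg fun a _ => negMulLog_nonneg (hp.1 a) (hp.le_one a))]
  calc ∑ a, negMulLog (p a) ≤ ∑ _a : A, (1 : ℝ) :=
        Finset.sum_le_sum fun a _ =>
          (negMulLog_le_one_sub_self (hp.1 a)).trans (by linarith [hp.1 a])
    _ = Fintype.card A := by simp

lemma intervalIntegrable_of_abs_le {f : ℝ → ℝ} (hf : Measurable f) {M : ℝ}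
    (hM : ∀ s, |f s| ≤ M) (x y : ℝ) : IntervalIntegrable f volume x y :=
  ⟨Measure.integrableOn_of_bounded measure_Ioc_lt_top.ne hf.aestronglyMeasurable (ae_of_all _ hM),
    Measure.integrableOn_of_bounded measure_Ioc_lt_top.ne hf.aestronglyMeasurable (ae_of_all _ hM)⟩

lemma intervalIntegrable_regularizedPayoff {r : ℝ → A → ℝ} (hr : ∀ a, Continuous fun s => r s a)
    (lam : ℝ) {b : ℝ → A → ℝ} (hbmeas : ∀ a, Measurable fun s => b s a)
    (hbdist : ∀ s, IsDist (b s)) (x y : ℝ) :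
    IntervalIntegrable (fun s => regularizedPayoff lam (r s) (b s)) volume x y := by
  have hb : ∀ a, IntervalIntegrable (fun s => b s a) volume x y := fun a =>
    intervalIntegrable_of_abs_le (hbmeas a)
      (fun s => abs_le.2 ⟨by linarith [(hbdist s).1 a], (hbdist s).le_one a⟩) x y
  have hentropy : IntervalIntegrable (fun s => entropy (b s)) volume x y :=
    intervalIntegrable_of_abs_le (by unfold entropy; fun_prop)
      (fun s => abs_entropy_le_card (hbdist s)) x y
  have hsum := IntervalIntegrable.sum Finset.univ fun a _ =>
    (hb a).mul_continuousOn (hr a).continuousOn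
  simpa only [regularizedPayoff, Finset.sum_apply] using hsum.add (hentropy.const_mul lam)

end Integrability

theorem csfp_bounded_regularized_regret_general {A : Type*} [Fintype A] [Nonempty A]
    (r : ℝ → A → ℝ)
    (hrcont : ∀ a, Continuous (fun s => r s a))
    (lam : ℝ) (hlam : 0 < lam)
    (b : ℝ → A → ℝ)
    (hbmeas : ∀ a, Measurable (fun s => b s a))
    (hbdist : ∀ t, IsDist (b t))
    (hbr : ∀ t ≥ (1:ℝ), ∀ p : A → ℝ, IsDist p →
      (∑ a, p a * ((1/t) * ∫ s in (0:ℝ)..t, r s a)) + lam * entropy p ≤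
      (∑ a, b t a * ((1/t) * ∫ s in (0:ℝ)..t, r s a)) + lam * entropy (b t)) :
    ∀ T ≥ (1:ℝ),
      sSup {x : ℝ | ∃ p : A → ℝ, IsDist p ∧
          x = ∫ s in (0:ℝ)..T, ((∑ a, p a * r s a) + lam * entropy p)}
        - (∫ s in (0:ℝ)..T, ((∑ a, b s a * r s a) + lam * entropy (b s)))
      = sSup {x : ℝ | ∃ p : A → ℝ, IsDist p ∧
          x = ∫ s in (0:ℝ)..(1:ℝ), ((∑ a, p a * r s a) + lam * entropy p)}
        - (∫ s in (0:ℝ)..(1:ℝ), ((∑ a, b s a * r s a) + lam * entropy (b s))) := by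
  intro T hT
  have hint := intervalIntegrable_regularizedPayoff hrcont lam hbmeas hbdist
  have hftc : ∫ s in (1:ℝ)..T, regularizedPayoff lam (r s) (b s)
      = T * logPartition lam (runningAverage r T) - 1 * logPartition lam (runningAverage r 1) := by
    refine integral_eq_sub_of_hasDerivAt (f := fun t => t * logPartition lam (runningAverage r t))
      (fun t ht => ?_) (hint 1 T)
    have ht : 1 ≤ t := (Set.uIcc_of_le hT ▸ ht).1
    rw [eq_softmax_of_forall_le hlam _ (hbdist t) (hbr t ht)]
    exact hasDerivAt_mul_logPartition_runningAverage hrcont hlam.ne' (by positivity)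
  show sSup {x | ∃ p, IsDist p ∧ x = ∫ s in (0:ℝ)..T, regularizedPayoff lam (r s) p}
      - ∫ s in (0:ℝ)..T, regularizedPayoff lam (r s) (b s)
    = sSup {x | ∃ p, IsDist p ∧ x = ∫ s in (0:ℝ)..1, regularizedPayoff lam (r s) p}
      - ∫ s in (0:ℝ)..1, regularizedPayoff lam (r s) (b s)
  rw [sSup_integral_regularizedPayoff hrcont hlam (by positivity),
    sSup_integral_regularizedPayoff hrcont hlam one_pos,
    ← integral_add_adjacent_intervals (hint 0 1) (hint 1 T), hftc]
  ring

/-- Continuous-time stochastic fictitious play has O(1) regret with respect to the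
entropy-regularized payoffs: for every `T ≥ 1`, the regularized regret over `[0, T]`
equals the regularized regret over `[0, 1]`, a quantity independent of `T`. -/
theorem csfp_bounded_regularized_regret {A : Type*} [Fintype A] [Nonempty A]
    (r : ℝ → A → ℝ)
    (hrcont : ∀ a, Continuous (fun s => r s a))
    (hrbdd : ∃ M : ℝ, ∀ s a, |r s a| ≤ M)
    (lam : ℝ) (hlam : 0 < lam)
    (b : ℝ → A → ℝ)
    (hbmeas : ∀ a, Measurable (fun s => b s a))
    (hbdist : ∀ t, IsDist (b t))
    (hbr : ∀ t ≥ (1:ℝ), ∀ p : A → ℝ, IsDist p →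
      (∑ a, p a * ((1/t) * ∫ s in (0:ℝ)..t, r s a)) + lam * entropy p ≤
      (∑ a, b t a * ((1/t) * ∫ s in (0:ℝ)..t, r s a)) + lam * entropy (b t)) :
    ∀ T ≥ (1:ℝ),
      sSup {x : ℝ | ∃ p : A → ℝ, IsDist p ∧
          x = ∫ s in (0:ℝ)..T, ((∑ a, p a * r s a) + lam * entropy p)}
        - (∫ s in (0:ℝ)..T, ((∑ a, b s a * r s a) + lam * entropy (b s)))
      = sSup {x : ℝ | ∃ p : A → ℝ, IsDist p ∧
          x = ∫ s in (0:ℝ)..(1:ℝ), ((∑ a, p a * r s a) + lam * entropy p)}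
        - (∫ s in (0:ℝ)..(1:ℝ), ((∑ a, b s a * r s a) + lam * entropy (b s))) :=
  csfp_bounded_regularized_regret_general r hrcont lam hlam b hbmeas hbdist hbr
end
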